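/- arXiv:2405.13690 — 2 statements merged into one kernel-verified Lean document; each statement's English description precedes it below -/
import Mathlib

section
/- For Z ~ N(0,1), σ > 0 and μ ∈ ℝ, α ∈ ℝ: E[Z·st(σZ + μ, α)] = σ·(Φ̄((α−μ)/σ) + Φ̄((α+μ)/σ)), where st(x, α) = relu(x − α) − relu(−x − α) is the soft-thresholding operator. -/
/-!
Split `st` into its two ramps. Scaling gives `E[Z relu(σZ - c)] = σ E[Z relu(Z - c/σ)]`, and since
`z φ(z) = -φ'(z)` an integration by parts over `(a, ∞)` turns `E[Z relu(Z - a)]` into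
`∫_a^∞ φ = Φ̄(a)`. The negative ramp reduces to the positive one under the symmetry `Z ↦ -Z`.
-/

open MeasureTheory ProbabilityTheory

noncomputable def gaussPDF (t : ℝ) : ℝ := Real.exp (-t ^ 2 / 2) / Real.sqrt (2 * Real.pi)

noncomputable def PhiBar (x : ℝ) : ℝ := ∫ t in Set.Ici x, gaussPDF t

noncomputable def relu (t : ℝ) : ℝ := max t 0

noncomputable def st (x c : ℝ) : ℝ := relu (x - c) - relu (-x - c)

open Real Set Filter Topology
open scoped ENNReal NNReal

lemma continuous_relu : Continuous relu := continuous_id.max continuous_const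

lemma relu_of_nonneg {t : ℝ} (ht : 0 ≤ t) : relu t = t := max_eq_left ht

lemma relu_of_nonpos {t : ℝ} (ht : t ≤ 0) : relu t = 0 := max_eq_right ht

lemma abs_relu_le (t : ℝ) : |relu t| ≤ |t| := by
  rw [relu, abs_of_nonneg (le_max_right t 0)]
  exact max_le (le_abs_self t) (abs_nonneg t)

lemma relu_mul_of_nonneg {c : ℝ} (hc : 0 ≤ c) (t : ℝ) : relu (c * t) = c * relu t := by
  rw [relu, relu, mul_max_of_nonneg _ _ hc, mul_zero]

lemma MeasureTheory.MemLp.relu_comp {α : Type*} [MeasurableSpace α] {μ : Measure α}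
    {p : ℝ≥0∞} {f : α → ℝ} (hf : MemLp f p μ) : MemLp (fun x => relu (f x)) p μ :=
  hf.of_le (continuous_relu.comp_aestronglyMeasurable hf.1)
    (ae_of_all _ fun x => abs_relu_le (f x))

lemma integrable_mul_relu_gaussianReal {m : ℝ} {v : ℝ≥0} {f : ℝ → ℝ}
    (hf : MemLp f 2 (gaussianReal m v)) :
    Integrable (fun z => z * relu (f z)) (gaussianReal m v) :=
  (memLp_id_gaussianReal' 2 (by norm_num)).integrable_mul hf.relu_comp

lemma gaussianPDFReal_zero_one : gaussianPDFReal 0 1 = gaussPDF := by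
  ext t
  simp [gaussianPDFReal, gaussPDF, div_eq_inv_mul]

lemma integral_gaussianReal_zero_one (f : ℝ → ℝ) :
    ∫ z, f z ∂gaussianReal 0 1 = ∫ z, gaussPDF z * f z := by
  simp [integral_gaussianReal_eq_integral_smul, gaussianPDFReal_zero_one]

lemma gaussPDF_nonneg (t : ℝ) : 0 ≤ gaussPDF t := by
  unfold gaussPDF
  positivity

lemma MeasureTheory.Integrable.gaussPDF_mul {f : ℝ → ℝ} (hf : Integrable f (gaussianReal 0 1)) :
    Integrable (fun z => gaussPDF z * f z) := by
  rw [gaussianReal_of_var_ne_zero 0 one_ne_zero, integrable_withDensity_iff_integrable_smul'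
    (measurable_gaussianPDF 0 1) (ae_of_all _ fun _ => gaussianPDF_lt_top)] at hf
  simp_rw [gaussianPDF, gaussianPDFReal_zero_one, ENNReal.toReal_ofReal (gaussPDF_nonneg _),
    smul_eq_mul] at hf
  exact hf

lemma integrable_gaussPDF : Integrable gaussPDF :=
  gaussianPDFReal_zero_one ▸ integrable_gaussianPDFReal 0 1

lemma integrable_mul_gaussPDF : Integrable fun z => z * gaussPDF z := by
  refine ((integrable_mul_exp_neg_mul_sq (b := 1 / 2) (by norm_num)).div_const √(2 * π)).congr
    (ae_of_all _ fun z => ?_)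
  simp only [gaussPDF]
  ring_nf

lemma hasDerivAt_gaussPDF (x : ℝ) : HasDerivAt gaussPDF (-x * gaussPDF x) x := by
  refine (((hasDerivAt_pow 2 x).neg.div_const 2).exp.div_const √(2 * π)).congr_deriv ?_
  simp only [gaussPDF, Pi.neg_apply]
  ring

lemma continuous_gaussPDF : Continuous gaussPDF :=
  continuous_iff_continuousAt.2 fun x => (hasDerivAt_gaussPDF x).continuousAt

lemma integrable_mul_mul_gaussPDF : Integrable fun z => z * z * gaussPDF z := by
  refine ((memLp_id_gaussianReal' 2 (by norm_num)).integrable_mul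
    (memLp_id_gaussianReal' 2 (by norm_num))).gaussPDF_mul.congr (ae_of_all _ fun z => ?_)
  simp only [Pi.mul_apply, id]
  ring

lemma integral_Ioi_sub_mul_mul_gaussPDF (a : ℝ) :
    ∫ z in Ioi a, (z - a) * (z * gaussPDF z) = PhiBar a := by
  set u : ℝ → ℝ := fun z => z - a
  set v : ℝ → ℝ := fun z => -gaussPDF z
  have hu (x : ℝ) : HasDerivAt u 1 x := (hasDerivAt_id' x).sub_const a
  have hv (x : ℝ) : HasDerivAt v (x * gaussPDF x) x :=
    (hasDerivAt_gaussPDF x).neg.congr_deriv (by ring)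
  have huv' : Integrable fun z => u z * (z * gaussPDF z) :=
    (integrable_mul_mul_gaussPDF.sub (integrable_mul_gaussPDF.const_mul a)).congr
      (ae_of_all _ fun z => by simp only [u, Pi.sub_apply]; ring)
  have hu'v : Integrable fun z => 1 * v z := by simpa [v] using integrable_gaussPDF.neg
  have huv : Integrable (u * v) :=
    (integrable_mul_gaussPDF.neg.add (integrable_gaussPDF.const_mul a)).congr
      (ae_of_all _ fun z => by simp only [u, v, Pi.mul_apply, Pi.add_apply, Pi.neg_apply]; ring)
  have h_zero : Tendsto (u * v) (𝓝[>] a) (𝓝 0) :=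
    (((continuous_id.sub continuous_const).mul continuous_gaussPDF.neg).tendsto' a 0
      (by simp)).mono_left nhdsWithin_le_nhds
  have h_infty : Tendsto (u * v) atTop (𝓝 0) :=
    tendsto_zero_of_hasDerivAt_of_integrableOn_Ioi (a := a) (fun x _ => (hu x).mul (hv x))
      (hu'v.add huv').integrableOn huv.integrableOn
  rw [integral_Ioi_mul_deriv_eq_deriv_mul (fun x _ => hu x) (fun x _ => hv x) huv'.integrableOn
    hu'v.integrableOn h_zero h_infty]
  simp [v, PhiBar, integral_Ici_eq_integral_Ioi, integral_neg]

lemma integral_mul_relu_sub_gaussianReal (a : ℝ) :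
    ∫ z, z * relu (z - a) ∂gaussianReal 0 1 = PhiBar a := by
  rw [integral_gaussianReal_zero_one, ← integral_Ioi_sub_mul_mul_gaussPDF,
    ← setIntegral_eq_integral_of_forall_compl_eq_zero (s := Ioi a)]
  · refine setIntegral_congr_fun measurableSet_Ioi fun z hz => ?_
    rw [relu_of_nonneg (sub_nonneg.2 (le_of_lt hz))]
    ring
  · intro z hz
    rw [relu_of_nonpos (sub_nonpos.2 (not_lt.1 hz)), mul_zero, mul_zero]

lemma integral_comp_neg_gaussianReal {v : ℝ≥0} (f : ℝ → ℝ) :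
    ∫ z, f (-z) ∂gaussianReal 0 v = ∫ z, f z ∂gaussianReal 0 v := by
  conv_rhs => rw [← neg_zero, ← gaussianReal_map_neg]
  exact (integral_map_equiv (MeasurableEquiv.neg ℝ) f).symm

lemma integral_mul_relu_mul_sub_gaussianReal {σ : ℝ} (hσ : 0 < σ) (c : ℝ) :
    ∫ z, z * relu (σ * z - c) ∂gaussianReal 0 1 = σ * PhiBar (c / σ) := by
  have hscale (z : ℝ) : z * relu (σ * z - c) = σ * (z * relu (z - c / σ)) := by
    rw [show σ * z - c = σ * (z - c / σ) by field_simp, relu_mul_of_nonneg hσ.le]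
    ring
  simp_rw [hscale, integral_const_mul, integral_mul_relu_sub_gaussianReal]

lemma integral_mul_relu_neg_mul_sub_gaussianReal {σ : ℝ} (hσ : 0 < σ) (c : ℝ) :
    ∫ z, z * relu (-(σ * z) - c) ∂gaussianReal 0 1 = -(σ * PhiBar (c / σ)) := by
  rw [← integral_mul_relu_mul_sub_gaussianReal hσ, ← integral_neg,
    ← integral_comp_neg_gaussianReal]
  simp

/-- E[Z·st(σZ + μ, α)] = σ·(Φ̄((α−μ)/σ) + Φ̄((α+μ)/σ)) for Z ~ N(0,1). -/
theorem gauss_z_st_mean (σ μ α : ℝ) (hσ : 0 < σ) :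
    (∫ z, z * st (σ * z + μ) α ∂(gaussianReal 0 1)) =
      σ * (PhiBar ((α - μ) / σ) + PhiBar ((α + μ) / σ)) := by
  have hst (z : ℝ) : z * st (σ * z + μ) α =
      z * relu (σ * z - (α - μ)) - z * relu (-(σ * z) - (α + μ)) := by
    rw [st, mul_sub]
    ring_nf
  have hint (b c : ℝ) : Integrable (fun z => z * relu (b * z - c)) (gaussianReal 0 1) :=
    integrable_mul_relu_gaussianReal
      (((memLp_id_gaussianReal' 2 (by norm_num)).const_mul b).sub (memLp_const c))
  simp_rw [hst]
  rw [integral_sub (hint σ _) (by simpa using hint (-σ) (α + μ)),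
    integral_mul_relu_mul_sub_gaussianReal hσ, integral_mul_relu_neg_mul_sub_gaussianReal hσ]
  ring
end

section
/- Let r(x) = α|x| + (η/2)x² be the elastic net with α, η ≥ 0 and let ŵ, v̂, τ̂ > 0, θ₀ > 0, and β₀ a random variable with P(β₀ = 0) = 1−ν and conditionally N(0, θ₀²/ν) with probability ν, independent of Z ~ N(0,1). Then E_{Z,β₀}[prox'_r(ŵβ₀/θ₀ + v̂Z, τ̂)] = (1/(1+ητ̂))·(ν·Φ̄(χ₁) + (1−ν)·Φ̄(χ₀))·2, where χ₀ = ατ̂/v̂ and χ₁ = ατ̂/√(v̂² + ŵ²/ν). -/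
/-!
Under the prior, `wh * β₀ / θ₀` has law `(1 - ν) δ₀ + ν N(0, wh² / ν)`; adding the independent
`vh * Z` convolves this law with `N(0, vh²)`, and Gaussians convolve to Gaussians, so the argument
of the prox derivative has law `(1 - ν) N(0, vh²) + ν N(0, vh² + wh² / ν)`. The prox derivative is
`1 / (1 + η τh)` times the indicator of `{x | α τh < |x|}`, whose `N(0, s²)`-measure is
`2 Φ̄(α τh / s)` by symmetry of the Gaussian.
-/

open MeasureTheory ProbabilityTheory

/-- Derivative (a.e.) of the elastic-net proximal map. -/
noncomputable def proxEnetDeriv (α η τ x : ℝ) : ℝ :=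
  (if α * τ < |x| then 1 else 0) / (1 + η * τ)

open Set
open scoped NNReal ENNReal

lemma gaussPDF_eq_gaussianPDFReal : gaussPDF = gaussianPDFReal 0 1 := by
  ext t
  simp [gaussPDF, gaussianPDFReal, div_eq_inv_mul]

lemma phiBar_eq_gaussianReal (x : ℝ) : PhiBar x = (gaussianReal 0 1).real (Ici x) := by
  rw [measureReal_def, gaussianReal_apply_eq_integral _ one_ne_zero, ENNReal.toReal_ofReal
    (setIntegral_nonneg measurableSet_Ici fun _ _ ↦ gaussianPDFReal_nonneg _ _ _), PhiBar,
    gaussPDF_eq_gaussianPDFReal]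

lemma gaussianReal_eq_map_const_mul {v : ℝ≥0} :
    gaussianReal 0 v = (gaussianReal 0 1).map (√(v : ℝ) * ·) := by
  rw [gaussianReal_map_const_mul, mul_zero, mul_one]
  congr
  ext
  simp

lemma gaussianReal_real_Ioi {v : ℝ≥0} (hv : v ≠ 0) (c : ℝ) :
    (gaussianReal 0 v).real (Ioi c) = PhiBar (c / √(v : ℝ)) := by
  have hσ : 0 < √(v : ℝ) := by positivity
  have : NullSingletonClass (gaussianReal (0 : ℝ) 1) :=
    nullSingletonClass_gaussianReal one_ne_zero
  rw [gaussianReal_eq_map_const_mul, map_measureReal_apply (by fun_prop) measurableSet_Ioi,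
    phiBar_eq_gaussianReal, ← measureReal_congr Ioi_ae_eq_Ici]
  congr 1
  ext y
  simp [div_lt_iff₀' hσ]

lemma gaussianReal_real_Iio_neg {v : ℝ≥0} (hv : v ≠ 0) (c : ℝ) :
    (gaussianReal 0 v).real (Iio (-c)) = PhiBar (c / √(v : ℝ)) := by
  have hsymm : (gaussianReal 0 v).map (-·) = gaussianReal 0 v := by
    simpa using gaussianReal_map_neg (μ := 0) (v := v)
  rw [← gaussianReal_real_Ioi hv, ← hsymm,
    map_measureReal_apply (by fun_prop) measurableSet_Ioi, hsymm]
  congr 1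
  ext y
  simp

lemma gaussianReal_real_lt_abs {v : ℝ≥0} (hv : v ≠ 0) {c : ℝ} (hc : 0 ≤ c) :
    (gaussianReal 0 v).real {x | c < |x|} = 2 * PhiBar (c / √(v : ℝ)) := by
  have hunion : {x : ℝ | c < |x|} = Iio (-c) ∪ Ioi c := by
    ext x
    simp [lt_abs, lt_neg, or_comm]
  have hdisj : Disjoint (Iio (-c)) (Ioi c) :=
    (Iic_disjoint_Ioi (by linarith)).mono_left Iio_subset_Iic_self
  rw [hunion, measureReal_union hdisj measurableSet_Ioi, gaussianReal_real_Iio_neg hv,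
    gaussianReal_real_Ioi hv, two_mul]

lemma proxEnetDeriv_eq_indicator (α η τ : ℝ) :
    proxEnetDeriv α η τ = {x | α * τ < |x|}.indicator fun _ ↦ (1 + η * τ)⁻¹ := by
  ext x
  simp [proxEnetDeriv, indicator_apply, ite_div]

lemma measurableSet_lt_abs (c : ℝ) : MeasurableSet {x : ℝ | c < |x|} :=
  measurableSet_lt measurable_const measurable_abs

lemma integrable_proxEnetDeriv (α η τ : ℝ) (μ : Measure ℝ) [IsFiniteMeasure μ] :
    Integrable (proxEnetDeriv α η τ) μ := by
  rw [proxEnetDeriv_eq_indicator]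
  exact (integrable_const _).indicator (measurableSet_lt_abs _)

lemma integral_proxEnetDeriv (α η τ : ℝ) (μ : Measure ℝ) :
    ∫ x, proxEnetDeriv α η τ x ∂μ = μ.real {x | α * τ < |x|} / (1 + η * τ) := by
  rw [proxEnetDeriv_eq_indicator, integral_indicator_const _ (measurableSet_lt_abs _),
    smul_eq_mul, div_eq_mul_inv]

lemma integral_proxEnetDeriv_gaussianReal {α η τ : ℝ} (hατ : 0 ≤ α * τ) {v : ℝ≥0}
    (hv : v ≠ 0) :
    ∫ x, proxEnetDeriv α η τ x ∂(gaussianReal 0 v) =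
      2 * PhiBar (α * τ / √(v : ℝ)) / (1 + η * τ) := by
  rw [integral_proxEnetDeriv, gaussianReal_real_lt_abs hv hατ]

lemma map_prod_eq_conv (ρ μ : Measure ℝ) [SFinite ρ] [SFinite μ] (a s : ℝ) :
    (ρ.prod μ).map (fun p ↦ a * p.1 + s * p.2) = ρ.map (a * ·) ∗ μ.map (s * ·) := by
  rw [Measure.conv, Measure.map_prod_map _ _ (by fun_prop) (by fun_prop),
    Measure.map_map (by fun_prop) (by fun_prop)]
  rfl

lemma integral_integral_comp_mul_add_mul (ρ μ : Measure ℝ) [SFinite ρ] [SFinite μ] (a s : ℝ)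
    {f : ℝ → ℝ} (hf : Integrable f (ρ.map (a * ·) ∗ μ.map (s * ·))) :
    ∫ b, ∫ z, f (a * b + s * z) ∂μ ∂ρ = ∫ x, f x ∂(ρ.map (a * ·) ∗ μ.map (s * ·)) := by
  rw [← map_prod_eq_conv] at hf ⊢
  rw [integral_map (by fun_prop) hf.1, integral_prod]
  exact (integrable_map_measure hf.1 (by fun_prop)).mp hf

noncomputable def gaussBernoulli (ν : ℝ) (v : ℝ≥0) : Measure ℝ :=
  ENNReal.ofReal (1 - ν) • Measure.dirac 0 + ENNReal.ofReal ν • gaussianReal 0 v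

instance isFiniteMeasure_gaussBernoulli (ν : ℝ) (v : ℝ≥0) :
    IsFiniteMeasure (gaussBernoulli ν v) :=
  ⟨by simp [gaussBernoulli, ENNReal.add_lt_top]⟩

lemma gaussBernoulli_map_const_mul (ν : ℝ) (v : ℝ≥0) (a : ℝ) :
    (gaussBernoulli ν v).map (a * ·) =
      gaussBernoulli ν (.mk (a ^ 2) (sq_nonneg a) * v) := by
  rw [gaussBernoulli, Measure.map_add _ _ (by fun_prop), Measure.map_smul, Measure.map_smul,
    Measure.map_dirac' (by fun_prop), gaussianReal_map_const_mul, mul_zero, gaussBernoulli]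

lemma gaussBernoulli_conv_gaussianReal (ν : ℝ) (v u : ℝ≥0) :
    gaussBernoulli ν v ∗ gaussianReal 0 u =
      ENNReal.ofReal (1 - ν) • gaussianReal 0 u + ENNReal.ofReal ν • gaussianReal 0 (v + u) := by
  rw [gaussBernoulli, Measure.add_conv, Measure.conv_smul_left, Measure.conv_smul_left,
    Measure.dirac_zero_conv, gaussianReal_conv_gaussianReal, add_zero]

theorem enet_prox_deriv_mean_general (α η wh vh τh θ₀ ν : ℝ)
    (hα : 0 ≤ α) (hvh : 0 < vh) (hτh : 0 < τh)
    (hθ : 0 < θ₀) (hν : 0 < ν) (hν1 : ν ≤ 1) :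
    (∫ b, ∫ z, proxEnetDeriv α η τh (wh * b / θ₀ + vh * z) ∂(gaussianReal 0 1)
        ∂((ENNReal.ofReal (1 - ν)) • Measure.dirac (0 : ℝ) +
          (ENNReal.ofReal ν) • gaussianReal 0 (Real.toNNReal (θ₀ ^ 2 / ν)))) =
      (1 / (1 + η * τh)) *
        (ν * PhiBar (α * τh / Real.sqrt (vh ^ 2 + wh ^ 2 / ν)) +
          (1 - ν) * PhiBar (α * τh / vh)) * 2 := by
  have hατ : 0 ≤ α * τh := mul_nonneg hα hτh.le
  set vZ : ℝ≥0 := .mk (vh ^ 2) (sq_nonneg vh)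
  set vX : ℝ≥0 := .mk ((wh / θ₀) ^ 2) (sq_nonneg _) * (θ₀ ^ 2 / ν).toNNReal + vZ
  have hvZ : √(vZ : ℝ) = vh := Real.sqrt_sq hvh.le
  have hvX : (vX : ℝ) = vh ^ 2 + wh ^ 2 / ν := by
    simp only [vX, vZ, NNReal.coe_add, NNReal.coe_mul, NNReal.coe_mk,
      Real.coe_toNNReal _ (by positivity : 0 ≤ θ₀ ^ 2 / ν)]
    field_simp
    ring
  have hvZ0 : vZ ≠ 0 := by rw [← NNReal.coe_ne_zero, NNReal.coe_mk]; positivity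
  have hvX0 : vX ≠ 0 := by rw [← NNReal.coe_ne_zero, hvX]; positivity
  simp_rw [mul_div_right_comm wh]
  change ∫ b, ∫ z, proxEnetDeriv α η τh (wh / θ₀ * b + vh * z) ∂gaussianReal 0 1
    ∂gaussBernoulli ν (θ₀ ^ 2 / ν).toNNReal = _
  rw [integral_integral_comp_mul_add_mul _ _ _ _ (integrable_proxEnetDeriv _ _ _ _),
    gaussBernoulli_map_const_mul, gaussianReal_map_const_mul, mul_zero, mul_one,
    gaussBernoulli_conv_gaussianReal,
    integral_add_measure ((integrable_proxEnetDeriv _ _ _ _).smul_measure ENNReal.ofReal_ne_top)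
      ((integrable_proxEnetDeriv _ _ _ _).smul_measure ENNReal.ofReal_ne_top),
    integral_smul_measure, integral_smul_measure,
    integral_proxEnetDeriv_gaussianReal hατ hvZ0, integral_proxEnetDeriv_gaussianReal hατ hvX0,
    hvZ, hvX, ENNReal.toReal_ofReal hν.le, ENNReal.toReal_ofReal (by linarith)]
  simp only [smul_eq_mul]
  ring

/-- Expectation of the elastic-net prox derivative over the Gauss–Bernoulli prior
and an independent standard Gaussian. -/
theorem enet_prox_deriv_mean (α η wh vh τh θ₀ ν : ℝ)
    (hα : 0 ≤ α) (hη : 0 ≤ η) (hwh : 0 < wh) (hvh : 0 < vh) (hτh : 0 < τh)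
    (hθ : 0 < θ₀) (hν : 0 < ν) (hν1 : ν ≤ 1) :
    (∫ b, ∫ z, proxEnetDeriv α η τh (wh * b / θ₀ + vh * z) ∂(gaussianReal 0 1)
        ∂((ENNReal.ofReal (1 - ν)) • Measure.dirac (0 : ℝ) +
          (ENNReal.ofReal ν) • gaussianReal 0 (Real.toNNReal (θ₀ ^ 2 / ν)))) =
      (1 / (1 + η * τh)) *
        (ν * PhiBar (α * τh / Real.sqrt (vh ^ 2 + wh ^ 2 / ν)) +
          (1 - ν) * PhiBar (α * τh / vh)) * 2 :=
  enet_prox_deriv_mean_general α η wh vh τh θ₀ ν hα hvh hτh hθ hν hν1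
end
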